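/- arXiv:2008.03279 — 2 statements merged into one kernel-verified Lean document; each statement's English description precedes it below -/
import Mathlib

section
/- Let G, H, H' be finite digraphs, ξ ∈ H(G,H) and ζ ∈ H(G,H') homomorphisms, and v ∈ V(G) a vertex with Γ_ξ(v) ⊆ Γ_ζ(v). Then Γ_ξ(v) is a proper subset of Γ_ζ(v) if and only if there exist a, b ∈ Γ_ζ(v) such that ab is a proper arc of G and ξ(a)ξ(b) is a proper arc of H. -/
/-!
`Γ_ξ(v)` is closed under stepping to adjacent vertices of the `ζ`-fibre of `v` unless some
such step changes the value of `ξ`; since `Γ_ζ(v)` is the component of `v` in that fibre,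
`Γ_ξ(v) ⊊ Γ_ζ(v)` forces an arc of `Γ_ζ(v)` on which `ξ` is not constant. Conversely,
`Γ_ξ(v)` lies in a single fibre of `ξ`.
-/

/-- A homomorphism between digraphs `(V, A)` and `(W, B)`:
a map sending every arc to an arc. -/
def IsHom {V W : Type} (A : V → V → Prop) (B : W → W → Prop) (f : V → W) : Prop :=
  ∀ ⦃v w : V⦄, A v w → B (f v) (f w)

/-- A strict homomorphism: a homomorphism mapping proper arcs to proper arcs. -/
def IsStrictHom {V W : Type} (A : V → V → Prop) (B : W → W → Prop) (f : V → W) : Prop :=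
  IsHom A B f ∧ ∀ ⦃v w : V⦄, A v w → v ≠ w → f v ≠ f w

/-- Adjacency in a digraph. -/
def DAdj {V : Type} (A : V → V → Prop) (v w : V) : Prop := A v w ∨ A w v

/-- `v` and `w` are connected in `X`: `v = w` (with `v ∈ X`), or there is a line
`z 0, …, z I` inside `X` connecting them, consecutive members being adjacent. -/
def ConnIn {V : Type} (A : V → V → Prop) (X : Set V) (v w : V) : Prop :=
  ∃ (I : ℕ) (z : ℕ → V), z 0 = v ∧ z I = w ∧ (∀ i ≤ I, z i ∈ X) ∧
    ∀ i < I, DAdj A (z i) (z (i + 1))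

/-- `γ_X(v)`: the set of `w ∈ X` connected with `v` in `X`. -/
def gammaSet {V : Type} (A : V → V → Prop) (X : Set V) (v : V) : Set V :=
  {w | ConnIn A X v w}

/-- `Γ_ξ(v)`: the connectivity component of `v` in the preimage `ξ⁻¹(ξ(v))`. -/
def GammaComp {V W : Type} (A : V → V → Prop) (ξ : V → W) (v : V) : Set V :=
  gammaSet A {u | ξ u = ξ v} v

/-- The set of homomorphisms `H(G,H)` (as a type). -/
def HomSet {V W : Type} (A : V → V → Prop) (B : W → W → Prop) : Type :=
  {f : V → W // IsHom A B f}

/-- The set of strict homomorphisms `S(G,H)` (as a type). -/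
def StrictHomSet {V W : Type} (A : V → V → Prop) (B : W → W → Prop) : Type :=
  {f : V → W // IsStrictHom A B f}

/-- The vertex set of the digraph `G_ξ`: the components `Γ_ξ(v)`, `v ∈ V(G)`. -/
def GVert {V W : Type} (A : V → V → Prop) (ξ : V → W) : Type :=
  {C : Set V // ∃ v, C = GammaComp A ξ v}

/-- The arc relation of the digraph `G_ξ`. -/
def GArc {V W : Type} (A : V → V → Prop) (ξ : V → W) :
    GVert A ξ → GVert A ξ → Prop :=
  fun C D => ∃ a ∈ C.1, ∃ b ∈ D.1, A a b

/-- The canonical map `π_ξ : G → G_ξ`, `v ↦ Γ_ξ(v)`. -/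
def piMap {V W : Type} (A : V → V → Prop) (ξ : V → W) (v : V) : GVert A ξ :=
  ⟨GammaComp A ξ v, v, rfl⟩

/-- `Θ_{G,H'}(ξ)`: the homomorphisms `ζ : G → H'` with `G_ζ = G_ξ`
(equality of the digraphs `G_ζ` and `G_ξ`, i.e. of their vertex sets,
which determines the arc sets). -/
def ThetaSet {V W W' : Type} (A : V → V → Prop) (B' : W' → W' → Prop)
    (ξ : V → W) : Set (V → W') :=
  {ζ | IsHom A B' ζ ∧
    {C : Set V | ∃ v, C = GammaComp A ζ v} = {C : Set V | ∃ v, C = GammaComp A ξ v}}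

/-- `R ⊑_Γ S` with respect to a class `D'` of finite digraphs: a strong Γ-scheme
from `R` to `S` exists, i.e. for every finite digraph `G ∈ D'` an injective map
`ρ_G : H(G,R) → H(G,S)` with `Γ_{ρ_G(ξ)}(v) = Γ_ξ(v)` for all `ξ`, `v`. -/
def SqGamma (D' : (V : Type) → (V → V → Prop) → Prop)
    {VR VS : Type} (R : VR → VR → Prop) (S : VS → VS → Prop) : Prop :=
  ∀ (V : Type) [Finite V] [Nonempty V] (A : V → V → Prop), D' V A →
    ∃ ρ : HomSet A R → HomSet A S, Function.Injective ρ ∧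
      ∀ (ξ : HomSet A R) (v : V), GammaComp A (ρ ξ).1 v = GammaComp A ξ.1 v

/-- The class `T_a`: digraphs whose loop-removed digraph is acyclic,
i.e. every closed walk is trivial. -/
def Ta {V : Type} (A : V → V → Prop) : Prop :=
  ∀ (z : ℕ → V) (I : ℕ), 0 < I →
    (∀ i < I, A (z i) (z (i + 1)) ∧ z i ≠ z (i + 1)) → z 0 ≠ z I

/-- A poset: a reflexive, antisymmetric, transitive digraph. -/
def IsPosetRel {V : Type} (A : V → V → Prop) : Prop :=
  Reflexive A ∧ AntiSymmetric A ∧ Transitive A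

/-- An element of `P^*`: an irreflexive, antisymmetric, transitive digraph. -/
def IsStrictPosetRel {V : Type} (A : V → V → Prop) : Prop :=
  Irreflexive A ∧ AntiSymmetric A ∧ Transitive A

/-- The direct (disjoint) sum of two digraphs. -/
def sumRel {V W : Type} (A : V → V → Prop) (B : W → W → Prop) :
    V ⊕ W → V ⊕ W → Prop
  | Sum.inl v, Sum.inl w => A v w
  | Sum.inr v, Sum.inr w => B v w
  | _, _ => False

/-- The open neighborhood `N(v)`. -/
def Nbr {Z : Type} (A : Z → Z → Prop) (v : Z) : Set Z :=
  {w | w ≠ v ∧ (A v w ∨ A w v)}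

/-- The in-neighborhood `N^in(v)`. -/
def NIn {Z : Type} (A : Z → Z → Prop) (v : Z) : Set Z :=
  {w | w ≠ v ∧ A w v}

/-- The out-neighborhood `N^out(v)`. -/
def NOut {Z : Type} (A : Z → Z → Prop) (v : Z) : Set Z :=
  {w | w ≠ v ∧ A v w}

/-- `A_r`: the arcs of `R` minus all arcs between `M` and `X`. -/
def ArRel {Z : Type} (A : Z → Z → Prop) (X M : Set Z) : Z → Z → Prop :=
  fun v w => A v w ∧ ¬(v ∈ M ∧ w ∈ X) ∧ ¬(v ∈ X ∧ w ∈ M)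

/-- `A_d = { m β(x) : m x ∈ A(R) ∩ (M × X) }`. -/
def AdRel {Z : Type} (A : Z → Z → Prop) (X M : Set Z) (β : Z → Z) : Z → Z → Prop :=
  fun v w => v ∈ M ∧ ∃ x ∈ X, A v x ∧ w = β x

/-- `A_u = { β(x) m : x m ∈ A(R) ∩ (X × M) }`. -/
def AuRel {Z : Type} (A : Z → Z → Prop) (X M : Set Z) (β : Z → Z) : Z → Z → Prop :=
  fun v w => w ∈ M ∧ ∃ x ∈ X, A x w ∧ v = β x

/-- The rearranged digraph `S`, with `A(S) = A_r ∪ A_d ∪ A_u`. -/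
def SRel {Z : Type} (A : Z → Z → Prop) (X M : Set Z) (β : Z → Z) : Z → Z → Prop :=
  fun v w => ArRel A X M v w ∨ AdRel A X M β v w ∨ AuRel A X M β v w

/-- `U_ξ = { v : ξ(v) ∈ T and ξ[N_G(v)] ∩ M ≠ ∅ }` (for `T = X`; with `T = Y`
this gives `U'_ζ`). -/
def USet {V Z : Type} (AG : V → V → Prop) (T M : Set Z) (ξ : V → Z) : Set V :=
  {v | ξ v ∈ T ∧ ∃ w ∈ Nbr AG v, ξ w ∈ M}

open Classical in
/-- The rearranged homomorphism `ρ_G(ξ)`: `β(ξ(v))` on `U_ξ` and `ξ(v)` elsewhere. -/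
noncomputable def rhoMap {V Z : Type} (AG : V → V → Prop) (X M : Set Z) (β : Z → Z)
    (ξ : V → Z) : V → Z :=
  fun v => if v ∈ USet AG X M ξ then β (ξ v) else ξ v

section Components

variable {V : Type} {A : V → V → Prop} {X : Set V} {v : V}

lemma mem_gammaSet_self (hv : v ∈ X) : v ∈ gammaSet A X v :=
  ⟨0, fun _ => v, rfl, rfl, fun _ _ => hv, fun _ h => absurd h (Nat.not_lt_zero _)⟩

lemma gammaSet_subset : gammaSet A X v ⊆ X := by
  rintro w ⟨I, z, -, rfl, hmem, -⟩
  exact hmem I le_rfl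

lemma mem_gammaSet_of_dAdj {a b : V} (ha : a ∈ gammaSet A X v) (hb : b ∈ X)
    (hab : DAdj A a b) : b ∈ gammaSet A X v := by
  obtain ⟨I, z, h0, rfl, hmem, hadj⟩ := ha
  refine ⟨I + 1, fun i => if i ≤ I then z i else b, by simpa using h0, by simp, ?_, ?_⟩
  · intro i hi
    by_cases h : i ≤ I
    · simpa [h] using hmem i h
    · simpa [h] using hb
  · intro i hi
    rcases Nat.lt_succ_iff_lt_or_eq.mp hi with h | rfl
    · simpa [h.le, Nat.succ_le_of_lt h] using hadj i h
    · simpa using hab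

lemma gammaSet_subset_of_dAdj_closed {T : Set V} (hv : v ∈ T)
    (hT : ∀ ⦃a b⦄, a ∈ T → b ∈ X → DAdj A a b → b ∈ T) : gammaSet A X v ⊆ T := by
  rintro w ⟨I, z, rfl, rfl, hmem, hadj⟩
  suffices ∀ i ≤ I, z i ∈ T from this I le_rfl
  intro i
  induction i with
  | zero => exact fun _ => hv
  | succ i ih => exact fun hi => hT (ih (by omega)) (hmem _ hi) (hadj i hi)

end Components

section GammaComp

variable {V W : Type} {A : V → V → Prop} {ξ : V → W} {v : V}

lemma mem_gammaComp_self : v ∈ GammaComp A ξ v :=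
  mem_gammaSet_self rfl

lemma eq_of_mem_gammaComp {w : V} (hw : w ∈ GammaComp A ξ v) : ξ w = ξ v :=
  gammaSet_subset (X := {u | ξ u = ξ v}) hw

lemma mem_gammaComp_of_dAdj {a b : V} (ha : a ∈ GammaComp A ξ v) (hab : DAdj A a b)
    (hξ : ξ a = ξ b) : b ∈ GammaComp A ξ v :=
  mem_gammaSet_of_dAdj ha (hξ.symm.trans (eq_of_mem_gammaComp ha)) hab

lemma eq_of_mem_gammaComp_of_mem {a b : V} (ha : a ∈ GammaComp A ξ v)
    (hb : b ∈ GammaComp A ξ v) : ξ a = ξ b :=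
  (eq_of_mem_gammaComp ha).trans (eq_of_mem_gammaComp hb).symm

end GammaComp

theorem stmt1_general {V W W' : Type}
    (A : V → V → Prop) (B : W → W → Prop)
    (ξ : V → W) (ζ : V → W') (hξ : IsHom A B ξ)
    (v : V) (hsub : GammaComp A ξ v ⊆ GammaComp A ζ v) :
    GammaComp A ξ v ⊂ GammaComp A ζ v ↔
      ∃ a ∈ GammaComp A ζ v, ∃ b ∈ GammaComp A ζ v,
        (A a b ∧ a ≠ b) ∧ (B (ξ a) (ξ b) ∧ ξ a ≠ ξ b) := by
  constructor
  · intro hssub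
    by_contra! hno
    refine hssub.2 (gammaSet_subset_of_dAdj_closed mem_gammaComp_self ?_)
    intro a b ha hb hab
    have haζ := hsub ha
    have hbζ : b ∈ GammaComp A ζ v := mem_gammaSet_of_dAdj haζ hb hab
    -- otherwise `ab` or `ba` is a proper arc in `Γ_ζ(v)` with a proper image under `ξ`
    refine mem_gammaComp_of_dAdj ha hab (by_contra fun hne => ?_)
    rcases hab with hab | hba
    · exact hne (hno a haζ b hbζ ⟨hab, fun h => hne (h ▸ rfl)⟩ (hξ hab))
    · exact Ne.symm hne (hno b hbζ a haζ ⟨hba, fun h => hne (h ▸ rfl)⟩ (hξ hba))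
  · rintro ⟨a, ha, b, hb, -, -, hξab⟩
    exact ⟨hsub, fun hsup => hξab (eq_of_mem_gammaComp_of_mem (hsup ha) (hsup hb))⟩

/-- For homomorphisms `ξ : G → H`, `ζ : G → H'` and a vertex `v` with
`Γ_ξ(v) ⊆ Γ_ζ(v)`: the inclusion is proper iff there are `a, b ∈ Γ_ζ(v)` such
that `ab` is a proper arc of `G` and `ξ(a)ξ(b)` is a proper arc of `H`. -/
theorem stmt1 {V W W' : Type} [Finite V] [Nonempty V] [Finite W] [Nonempty W]
    [Finite W'] [Nonempty W']
    (A : V → V → Prop) (B : W → W → Prop) (B' : W' → W' → Prop)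
    (ξ : V → W) (ζ : V → W') (hξ : IsHom A B ξ) (hζ : IsHom A B' ζ)
    (v : V) (hsub : GammaComp A ξ v ⊆ GammaComp A ζ v) :
    GammaComp A ξ v ⊂ GammaComp A ζ v ↔
      ∃ a ∈ GammaComp A ζ v, ∃ b ∈ GammaComp A ζ v,
        (A a b ∧ a ≠ b) ∧ (B (ξ a) (ξ b) ∧ ξ a ≠ ξ b) :=
  stmt1_general A B ξ ζ hξ v hsub
end

section
/- Let R, S be finite digraphs, D' a class of finite digraphs, and G_{D'}(R) ≡ {G_ξ : ξ ∈ H(G,R), G ∈ D'}. If #S(G,R) ≤ #S(G,S) for all G ∈ G_{D'}(R), then R ⊑_Γ S with respect to D'. -/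
/-!
The homomorphisms `ζ : G → H` with the same components as a fixed `ξ`, i.e.
`Γ_ζ = Γ_ξ`, are exactly the maps `g ∘ π_ξ` with `g : G_ξ → H` a strict homomorphism:
a strict `g` never identifies the images of two adjacent vertices lying in different
components, so no new components are merged. Hence the partition of `H(G,R)` and of
`H(G,S)` according to `Γ` has blocks of sizes `#S(G_ξ,R)` and `#S(G_ξ,S)`, and an injection
between corresponding blocks glues to the required scheme `ρ_G`.
-/

open Function Relation

theorem nonempty_embedding_of_natCard_le {α β : Type*} [Finite α]
    (h : Nat.card α ≤ Nat.card β) : Nonempty (α ↪ β) := by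
  rcases finite_or_infinite β with hβ | hβ
  · have := Fintype.ofFinite α
    have := Fintype.ofFinite β
    rw [Nat.card_eq_fintype_card, Nat.card_eq_fintype_card] at h
    exact Embedding.nonempty_of_card_le h
  · exact ⟨(Finite.equivFin α).toEmbedding.trans
      (Fin.valEmbedding.trans (Infinite.natEmbedding β))⟩

theorem exists_injective_of_natCard_fiber_le {α β κ : Type*} [Finite α]
    (f : α → κ) (g : β → κ)
    (h : ∀ a, Nat.card {a' // f a' = f a} ≤ Nat.card {b // g b = f a}) :
    ∃ ρ : α → β, Injective ρ ∧ ∀ a, g (ρ a) = f a := by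
  have hfiber : ∀ k, Nonempty ({a // f a = k} ↪ {b // g b = k}) := by
    intro k
    by_cases hk : ∃ a, f a = k
    · obtain ⟨a, rfl⟩ := hk
      exact nonempty_embedding_of_natCard_le (h a)
    · have : IsEmpty {a // f a = k} := ⟨fun a => hk ⟨a.1, a.2⟩⟩
      exact ⟨Embedding.ofIsEmpty⟩
  let e k := (hfiber k).some
  refine ⟨Equiv.sigmaFiberEquiv g ∘ Sigma.map id (fun k => ⇑(e k)) ∘
    (Equiv.sigmaFiberEquiv f).symm, ?_, ?_⟩
  · exact (Equiv.injective _).comp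
      ((injective_id.sigma_map fun k => (e k).injective).comp (Equiv.injective _))
  · intro a
    exact (e (f a) ⟨a, rfl⟩).2

section Components

variable {V W W' : Type} (A : V → V → Prop)

def FiberAdj (ξ : V → W) (a b : V) : Prop := DAdj A a b ∧ ξ a = ξ b

variable {A}

instance (ξ : V → W) : Std.Symm (FiberAdj A ξ) :=
  ⟨fun _ _ h => ⟨h.1.symm, h.2.symm⟩⟩

theorem Relation.ReflTransGen.apply_eq_of_fiberAdj {ξ : V → W} {a b : V}
    (h : ReflTransGen (FiberAdj A ξ) a b) : ξ a = ξ b := by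
  induction h with
  | refl => rfl
  | tail _ hbc ih => exact ih.trans hbc.2

theorem mem_gammaComp_iff {ξ : V → W} {v w : V} :
    w ∈ GammaComp A ξ v ↔ ReflTransGen (FiberAdj A ξ) v w := by
  constructor
  · rintro ⟨I, z, rfl, rfl, hmem, hadj⟩
    suffices ∀ J ≤ I, ReflTransGen (FiberAdj A ξ) (z 0) (z J) from this I le_rfl
    intro J
    induction J with
    | zero => exact fun _ => .refl
    | succ n ih =>
      intro hn
      have hlevel : ξ (z n) = ξ (z (n + 1)) := (hmem n (by omega)).trans (hmem (n + 1) hn).symm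
      exact (ih (by omega)).tail ⟨hadj n (by omega), hlevel⟩
  · intro h
    induction h with
    | refl => exact ⟨0, fun _ => v, rfl, rfl, fun _ _ => rfl, fun _ hi => absurd hi (by omega)⟩
    | @tail b c hvb hbc ih =>
      obtain ⟨I, z, hz0, hzI, hmem, hadj⟩ := ih
      refine ⟨I + 1, fun i => if i ≤ I then z i else c, by simp [hz0], by simp, ?_, ?_⟩
      · intro i _
        by_cases hi : i ≤ I
        · simpa [hi] using hmem i hi
        · simpa [hi] using (hvb.tail hbc).apply_eq_of_fiberAdj.symm
      · intro i hi
        by_cases hiI : i < I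
        · simpa [hiI.le, Nat.succ_le_of_lt hiI] using hadj i hiI
        · obtain rfl : i = I := by omega
          simpa [hzI] using hbc.1

theorem gammaComp_eq_gammaComp_iff {ξ : V → W} {u v : V} :
    GammaComp A ξ u = GammaComp A ξ v ↔ ReflTransGen (FiberAdj A ξ) u v := by
  refine ⟨fun h => mem_gammaComp_iff.1 (h ▸ mem_gammaComp_iff.2 .refl), fun h => ?_⟩
  ext w
  simp only [mem_gammaComp_iff]
  exact ⟨(symm h).trans, h.trans⟩

theorem gammaComp_eq_iff {ζ : V → W'} {ξ : V → W} :
    GammaComp A ζ = GammaComp A ξ ↔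
      ReflTransGen (FiberAdj A ζ) = ReflTransGen (FiberAdj A ξ) := by
  simp only [funext_iff, Set.ext_iff, mem_gammaComp_iff, eq_iff_iff]

end Components

section Quotient

variable {V W W' : Type} {A : V → V → Prop} {ξ : V → W} {B : W' → W' → Prop}

theorem piMap_eq_piMap_iff {u v : V} :
    piMap A ξ u = piMap A ξ v ↔ ReflTransGen (FiberAdj A ξ) u v :=
  Subtype.ext_iff.trans gammaComp_eq_gammaComp_iff

theorem piMap_surjective : Surjective (piMap A ξ) :=
  fun ⟨_, v, hv⟩ => ⟨v, Subtype.ext hv.symm⟩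

theorem piMap_eq_of_mem {C : GVert A ξ} {a : V} (ha : a ∈ C.1) : piMap A ξ a = C := by
  obtain ⟨c, rfl⟩ := piMap_surjective C
  exact piMap_eq_piMap_iff.2 (symm (mem_gammaComp_iff.1 ha))

theorem gArc_piMap {a b : V} (h : A a b) : GArc A ξ (piMap A ξ a) (piMap A ξ b) :=
  ⟨a, mem_gammaComp_iff.2 .refl, b, mem_gammaComp_iff.2 .refl, h⟩

theorem exists_of_gArc {C D : GVert A ξ} (h : GArc A ξ C D) :
    ∃ a b, A a b ∧ piMap A ξ a = C ∧ piMap A ξ b = D := by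
  obtain ⟨a, ha, b, hb, hab⟩ := h
  exact ⟨a, b, hab, piMap_eq_of_mem ha, piMap_eq_of_mem hb⟩

theorem IsHom.comp_piMap {g : GVert A ξ → W'} (hg : IsHom (GArc A ξ) B g) :
    IsHom A B (g ∘ piMap A ξ) :=
  fun _ _ h => hg (gArc_piMap h)

theorem IsStrictHom.apply_piMap_ne {g : GVert A ξ → W'} (hg : IsStrictHom (GArc A ξ) B g)
    {a b : V} (hab : DAdj A a b) (hne : piMap A ξ a ≠ piMap A ξ b) :
    g (piMap A ξ a) ≠ g (piMap A ξ b) := by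
  rcases hab with hab | hba
  · exact hg.2 (gArc_piMap hab) hne
  · exact (hg.2 (gArc_piMap hba) hne.symm).symm

theorem IsStrictHom.gammaComp_comp_piMap {g : GVert A ξ → W'}
    (hg : IsStrictHom (GArc A ξ) B g) :
    GammaComp A (g ∘ piMap A ξ) = GammaComp A ξ := by
  rw [gammaComp_eq_iff]
  apply le_antisymm <;> apply reflTransGen_closed
  · intro a b hab
    by_contra hne
    exact hg.apply_piMap_ne hab.1 (mt piMap_eq_piMap_iff.1 hne) hab.2
  · intro a b hab
    exact .single ⟨hab.1, congrArg g (piMap_eq_piMap_iff.2 (.single hab))⟩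

theorem isStrictHom_of_comp_piMap {g : GVert A ξ → W'} (hζ : IsHom A B (g ∘ piMap A ξ))
    (hΓ : GammaComp A (g ∘ piMap A ξ) = GammaComp A ξ) : IsStrictHom (GArc A ξ) B g := by
  refine ⟨fun C D hCD => ?_, fun C D hCD hne hgCD => hne ?_⟩
  · obtain ⟨a, b, hab, rfl, rfl⟩ := exists_of_gArc hCD
    exact hζ hab
  · obtain ⟨a, b, hab, rfl, rfl⟩ := exists_of_gArc hCD
    have hfib : ReflTransGen (FiberAdj A (g ∘ piMap A ξ)) a b := .single ⟨.inl hab, hgCD⟩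
    rw [gammaComp_eq_iff.1 hΓ] at hfib
    exact piMap_eq_piMap_iff.2 hfib

variable (A ξ B) in
def compPiMap (g : StrictHomSet (GArc A ξ) B) :
    {ζ : HomSet A B // GammaComp A ζ.1 = GammaComp A ξ} :=
  ⟨⟨g.1 ∘ piMap A ξ, g.2.1.comp_piMap⟩, g.2.gammaComp_comp_piMap⟩

theorem compPiMap_bijective : Bijective (compPiMap A ξ B) := by
  refine ⟨fun g g' h => Subtype.ext (piMap_surjective.injective_comp_right ?_), fun ζ => ?_⟩
  · exact congrArg (fun ζ => ζ.1.1) h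
  · have hfactor (a : V) : ζ.1.1 (surjInv piMap_surjective (piMap A ξ a)) = ζ.1.1 a := by
      have hξ := piMap_eq_piMap_iff.1 (surjInv_eq piMap_surjective (piMap A ξ a))
      rw [← gammaComp_eq_iff.1 ζ.2] at hξ
      exact hξ.apply_eq_of_fiberAdj
    have hcomp : (ζ.1.1 ∘ surjInv piMap_surjective) ∘ piMap A ξ = ζ.1.1 := funext hfactor
    have hstrict : IsStrictHom (GArc A ξ) B (ζ.1.1 ∘ surjInv piMap_surjective) :=
      isStrictHom_of_comp_piMap (by rw [hcomp]; exact ζ.1.2) (by rw [hcomp]; exact ζ.2)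
    exact ⟨⟨_, hstrict⟩, Subtype.ext (Subtype.ext hcomp)⟩

theorem natCard_strictHomSet_gArc (A : V → V → Prop) (ξ : V → W) (B : W' → W' → Prop) :
    Nat.card (StrictHomSet (GArc A ξ) B) =
      Nat.card {ζ : HomSet A B // GammaComp A ζ.1 = GammaComp A ξ} :=
  Nat.card_eq_of_bijective _ compPiMap_bijective

end Quotient

instance {V W : Type} [Finite V] [Finite W] (A : V → V → Prop) (B : W → W → Prop) :
    Finite (HomSet A B) :=
  Subtype.finite

theorem stmt6_general {VR VS : Type} [Finite VR]
    (R : VR → VR → Prop) (S : VS → VS → Prop)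
    (D' : (V : Type) → (V → V → Prop) → Prop)
    (h : ∀ (V : Type) [Finite V] [Nonempty V] (A : V → V → Prop), D' V A →
      ∀ ξ : V → VR, IsHom A R ξ →
        Nat.card (StrictHomSet (GArc A ξ) R) ≤ Nat.card (StrictHomSet (GArc A ξ) S)) :
    SqGamma D' R S := by
  intro V _ _ A hD
  obtain ⟨ρ, hρ, hΓ⟩ := exists_injective_of_natCard_fiber_le
    (fun ξ : HomSet A R => GammaComp A ξ.1) (fun ζ : HomSet A S => GammaComp A ζ.1)
    fun ξ => by
      rw [← natCard_strictHomSet_gArc, ← natCard_strictHomSet_gArc]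
      exact h V A hD ξ.1 ξ.2
  exact ⟨ρ, hρ, fun ξ => congrFun (hΓ ξ)⟩

/-- If `#S(G,R) ≤ #S(G,S)` for all `G ∈ G_{D'}(R) = {G_ξ : ξ ∈ H(G,R), G ∈ D'}`,
then `R ⊑_Γ S` with respect to `D'`. -/
theorem stmt6 {VR VS : Type} [Finite VR] [Nonempty VR] [Finite VS] [Nonempty VS]
    (R : VR → VR → Prop) (S : VS → VS → Prop)
    (D' : (V : Type) → (V → V → Prop) → Prop)
    (h : ∀ (V : Type) [Finite V] [Nonempty V] (A : V → V → Prop), D' V A →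
      ∀ ξ : V → VR, IsHom A R ξ →
        Nat.card (StrictHomSet (GArc A ξ) R) ≤ Nat.card (StrictHomSet (GArc A ξ) S)) :
    SqGamma D' R S :=
  stmt6_general R S D' h
end
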